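/- arXiv:1905.07355 — 5 statements merged into one kernel-verified Lean document; each statement's English description precedes it below -/
import Mathlib

section
/- Let k ≥ 2 and 1 ≤ d ≤ k−1 be integers, Γ ⊆ ℤ^k a finite set, P_i = π_i(Γ), and I = {1,…,k−d}. Suppose: (a) there exist x = (x_1,…,x_{k−d}) ∈ P_1 × ⋯ × P_{k−d} and linear orders on ℤ for the last d coordinates (with product partial order σ) such that H((Γ_I^x)_σ) ≠ 0; and (b) for every proper subset I′ ⊊ I and every choice of linear orders on ℤ for the coordinates outside I′ (with product partial order α), H((Γ_{I′}^{x′})_α) = 0, where x′ is the restriction of x to I′. Then, setting x̄ = (x_2,…,x_{k−d}), for every z_1 ∈ P_1 one has (Γ_I^x)_σ ⊆ Γ_I^{(z_1,x̄)}. -/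
open scoped BigOperators
open Classical

noncomputable section

namespace SlicePaper

/-- Shannon entropy of the `i`-th coordinate marginal of a distribution `p` on `Δ`. -/
def margEnt {ι : Type*} [Fintype ι] (Δ : Finset (ι → ℤ)) (p : (ι → ℤ) → ℝ) (i : ι) : ℝ :=
  -∑ α ∈ Δ.image (fun γ => γ i),
      (∑ γ ∈ Δ.filter (fun γ => γ i = α), p γ) *
        Real.log (∑ γ ∈ Δ.filter (fun γ => γ i = α), p γ)

/-- The entropy `H(Δ)` of a finite set of integer tuples. -/
def HSet {ι : Type*} [Fintype ι] (Δ : Finset (ι → ℤ)) : ℝ :=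
  sSup {e : ℝ | ∃ p : (ι → ℤ) → ℝ, (∀ γ, 0 ≤ p γ) ∧ (∀ γ, p γ ≠ 0 → γ ∈ Δ) ∧
    (∑ γ ∈ Δ, p γ) = 1 ∧ e = ⨅ i, margEnt Δ p i}

/-- Maximal elements of `Δ` w.r.t. the product of the linear orders `σ i`. -/
def maxElems {ι : Type*} [Fintype ι] (σ : ι → LinearOrder ℤ) (Δ : Finset (ι → ℤ)) :
    Finset (ι → ℤ) :=
  Δ.filter (fun γ => ∀ δ ∈ Δ, (∀ i, (σ i).le (γ i) (δ i)) → γ = δ)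

/-- `ξ k = log (k / (k-1)^((k-1)/k))`. -/
def xi (k : ℕ) : ℝ :=
  Real.log ((k : ℝ) / ((k : ℝ) - 1) ^ (((k : ℝ) - 1) / (k : ℝ)))

/-- Slice rank of a coefficient array `c`. -/
def sliceRank {k : ℕ} (F : Type*) [Field F] (τ : Fin k → Type*) [∀ i, Fintype (τ i)]
    (c : (∀ i, τ i) → F) : ℕ :=
  sInf {r : ℕ | ∃ j : Fin r → Fin k, ∃ a : ∀ l : Fin r, τ (j l) → F,
    ∃ b : ∀ l : Fin r, (((i : {i : Fin k // i ≠ j l}) → τ i.1) → F),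
    ∀ s : ∀ i, τ i, c s = ∑ l : Fin r, a l (s (j l)) * b l (fun i => s i.1)}

/-- `n`-th tensor power of a coefficient array. -/
def tpow {k : ℕ} {F : Type*} [Field F] {τ : Fin k → Type*} (c : (∀ i, τ i) → F) (n : ℕ) :
    (∀ i, Fin n → τ i) → F :=
  fun u => ∏ m : Fin n, c (fun i => u i m)

/-- Support of a coefficient array, as a finite set of integer tuples. -/
def support {k : ℕ} {F : Type*} [Field F] (S : Fin k → Finset ℤ)
    (c : (∀ i, {x : ℤ // x ∈ S i}) → F) : Finset (Fin k → ℤ) :=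
  (Finset.univ.filter (fun s : ∀ i, {x : ℤ // x ∈ S i} => c s ≠ 0)).image
    (fun s i => (s i : ℤ))

/-- Section `Γ_I^x`: restrictions to coordinates outside `I` of the γ ∈ Γ agreeing with x on I. -/
def sect {k : ℕ} (Γ : Finset (Fin k → ℤ)) (I : Finset (Fin k)) (x : Fin k → ℤ) :
    Finset ({i : Fin k // i ∉ I} → ℤ) :=
  (Γ.filter (fun γ => ∀ i ∈ I, γ i = x i)).image (fun γ i => γ i.1)

/-- Section along a single coordinate. -/
def sect1 {k : ℕ} (Γ : Finset (Fin k → ℤ)) (i : Fin k) (a : ℤ) :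
    Finset ({j : Fin k // j ≠ i} → ℤ) :=
  (Γ.filter (fun γ => γ i = a)).image (fun γ j => γ j.1)

/-- Trifferent set of strings. -/
def trifferent {n : ℕ} {α : Type*} (A : Finset (Fin n → α)) : Prop :=
  ∀ x ∈ A, ∀ y ∈ A, ∀ z ∈ A, x ≠ y → y ≠ z → x ≠ z →
    ∃ i, x i ≠ y i ∧ y i ≠ z i ∧ x i ≠ z i

/-- The cube root of unity `ω = e^{2πi/3}`. -/
def w : ℂ := Complex.exp (2 * Real.pi * Complex.I / 3)

/-- The tensor `f_{x,y}(z,t)` used for the trifference problem. -/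
def f {n : ℕ} (x y z t : Fin n → ℂ) : ℂ :=
  ∏ i, (x i + y i + z i) * (x i + y i + t i)

/-- Monomial functions `g_{α,β}`. -/
def g {n : ℕ} (α β : Fin n → ℕ) : (Fin n → ℂ) × (Fin n → ℂ) → ℂ :=
  fun q => ∏ i, (q.1 i + q.2 i) ^ α i * (q.1 i * q.2 i) ^ β i



/-! ### Auxiliary infrastructure for `stmt13` -/

/-- Injection of `ℤ` into itself placing `z` on top, `x` second (when distinct). -/
def encTop (z x : ℤ) (a : ℤ) : ℤ :=
  if a = z then 1 else if a = x then 0 else -(if 0 ≤ a then 2*a+2 else -2*a+3)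

lemma encTop_inj (z x : ℤ) : Function.Injective (encTop z x) := by
  intro a b h
  unfold encTop at h
  split_ifs at h <;> omega

/-- A linear order on `ℤ` with `z` as maximum and `x` just below. -/
def ord2 (z x : ℤ) : LinearOrder ℤ := LinearOrder.lift' (encTop z x) (encTop_inj z x)

lemma ord2_le_iff {z x a b : ℤ} : (ord2 z x).le a b ↔ encTop z x a ≤ encTop z x b := Iff.rfl

lemma ord2_le_top (z x a : ℤ) : (ord2 z x).le a z := by
  rw [ord2_le_iff]; unfold encTop; split_ifs <;> omega

lemma ord2_top_le {z x a : ℤ} (h : (ord2 z x).le z a) : a = z := by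
  rw [ord2_le_iff] at h; unfold encTop at h; split_ifs at h <;> omega

lemma ord2_snd_le {z x a : ℤ} (h : (ord2 z x).le x a) : a = z ∨ a = x := by
  rw [ord2_le_iff] at h; unfold encTop at h; split_ifs at h <;> omega

lemma mem_maxElems {ι : Type*} [Fintype ι] {σ : ι → LinearOrder ℤ} {Δ : Finset (ι → ℤ)}
    {γ : ι → ℤ} :
    γ ∈ maxElems σ Δ ↔ γ ∈ Δ ∧ ∀ δ ∈ Δ, (∀ i, (σ i).le (γ i) (δ i)) → γ = δ := by
  simp [maxElems]

lemma maxElems_subset {ι : Type*} [Fintype ι] {σ : ι → LinearOrder ℤ} {Δ : Finset (ι → ℤ)} :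
    maxElems σ Δ ⊆ Δ := Finset.filter_subset _ _

lemma le_antisymm_pi {ι : Type*} {σ : ι → LinearOrder ℤ} {u v : ι → ℤ}
    (h1 : ∀ i, (σ i).le (u i) (v i)) (h2 : ∀ i, (σ i).le (v i) (u i)) : u = v :=
  funext fun i => (σ i).le_antisymm _ _ (h1 i) (h2 i)

lemma exists_le_maxElems {ι : Type*} [Fintype ι] (σ : ι → LinearOrder ℤ) (Δ : Finset (ι → ℤ))
    {γ : ι → ℤ} (hγ : γ ∈ Δ) :
    ∃ δ ∈ maxElems σ Δ, ∀ i, (σ i).le (γ i) (δ i) := by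
  suffices h : ∀ n (γ : ι → ℤ), γ ∈ Δ →
      (Δ.filter (fun δ => (∀ i, (σ i).le (γ i) (δ i)) ∧ γ ≠ δ)).card ≤ n →
      ∃ δ ∈ maxElems σ Δ, ∀ i, (σ i).le (γ i) (δ i) from h _ γ hγ le_rfl
  intro n
  induction n with
  | zero =>
    intro γ hγ hn
    refine ⟨γ, ?_, fun i => (σ i).le_refl _⟩
    rw [mem_maxElems]
    refine ⟨hγ, fun δ hδ hle => ?_⟩
    by_contra hne
    have hm : δ ∈ Δ.filter (fun δ => (∀ i, (σ i).le (γ i) (δ i)) ∧ γ ≠ δ) := by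
      simp [hδ, hle, hne]
    have h2 := Finset.card_pos.2 ⟨δ, hm⟩
    exact Nat.lt_irrefl 0 (lt_of_lt_of_le h2 hn)
  | succ n ih =>
    intro γ hγ hn
    by_cases h : ∃ δ ∈ Δ, (∀ i, (σ i).le (γ i) (δ i)) ∧ γ ≠ δ
    · obtain ⟨δ, hδ, hle, hne⟩ := h
      have hsub : Δ.filter (fun ε => (∀ i, (σ i).le (δ i) (ε i)) ∧ δ ≠ ε) ⊂
          Δ.filter (fun ε => (∀ i, (σ i).le (γ i) (ε i)) ∧ γ ≠ ε) := by
        refine ⟨fun ε hε => ?_, fun hcon => ?_⟩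
        · rw [Finset.mem_filter] at hε ⊢
          obtain ⟨hεΔ, hle2, hne2⟩ := hε
          refine ⟨hεΔ, fun i => (σ i).le_trans _ _ _ (hle i) (hle2 i), fun hco => ?_⟩
          exact hne (le_antisymm_pi hle (hco ▸ hle2))
        · have hδmem : δ ∈ Δ.filter (fun ε => (∀ i, (σ i).le (γ i) (ε i)) ∧ γ ≠ ε) := by
            simp [hδ, hle, hne]
          have := hcon hδmem
          rw [Finset.mem_filter] at this
          exact this.2.2 rfl
      have hcard := Finset.card_lt_card hsub
      obtain ⟨ε, hε, hle3⟩ := ih δ hδ (Nat.lt_succ_iff.mp (lt_of_lt_of_le hcard hn))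
      exact ⟨ε, hε, fun i => (σ i).le_trans _ _ _ (hle i) (hle3 i)⟩
    · push_neg at h
      exact ⟨γ, mem_maxElems.2 ⟨hγ, h⟩, fun i => (σ i).le_refl _⟩

lemma mem_sect {k : ℕ} {Γ : Finset (Fin k → ℤ)} {I : Finset (Fin k)} {x : Fin k → ℤ}
    {δ : {i : Fin k // i ∉ I} → ℤ} :
    δ ∈ sect Γ I x ↔ ∃ γ ∈ Γ, (∀ i ∈ I, γ i = x i) ∧ ∀ j : {i : Fin k // i ∉ I}, γ j.1 = δ j := by
  simp only [sect, Finset.mem_image, Finset.mem_filter, funext_iff]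
  constructor
  · rintro ⟨γ, ⟨h1, h2⟩, h3⟩; exact ⟨γ, h1, h2, h3⟩
  · rintro ⟨γ, h1, h2, h3⟩; exact ⟨γ, ⟨h1, h2⟩, h3⟩

section Entropy
variable {ι : Type*} [Fintype ι] {Δ : Finset (ι → ℤ)} {p : (ι → ℤ) → ℝ}

lemma neg_mul_log_le_one {q : ℝ} (h0 : 0 ≤ q) : -(q * Real.log q) ≤ 1 := by
  rcases eq_or_lt_of_le h0 with h | h
  · simp [← h]
  · have hlog : Real.log q⁻¹ ≤ q⁻¹ - 1 := Real.log_le_sub_one_of_pos (inv_pos.2 h)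
    have h2 : -(q * Real.log q) = q * Real.log q⁻¹ := by rw [Real.log_inv]; ring
    have h3 : q * Real.log q⁻¹ ≤ q * (q⁻¹ - 1) :=
      mul_le_mul_of_nonneg_left hlog (le_of_lt h)
    have h4 : q * (q⁻¹ - 1) = 1 - q := by field_simp
    rw [h2]; rw [h4] at h3; linarith

lemma margEnt_nonneg (hp : ∀ γ, 0 ≤ p γ) (hsum : (∑ γ ∈ Δ, p γ) = 1) (i : ι) :
    0 ≤ margEnt Δ p i := by
  unfold margEnt
  rw [neg_nonneg]
  apply Finset.sum_nonpos
  intro α _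
  have h0 : 0 ≤ ∑ γ ∈ Δ.filter (fun γ => γ i = α), p γ :=
    Finset.sum_nonneg fun γ _ => hp γ
  have h1 : (∑ γ ∈ Δ.filter (fun γ => γ i = α), p γ) ≤ 1 := by
    rw [← hsum]
    exact Finset.sum_le_sum_of_subset_of_nonneg (Finset.filter_subset _ _)
      (fun γ _ _ => hp γ)
  exact mul_nonpos_of_nonneg_of_nonpos h0 (Real.log_nonpos h0 h1)

lemma margEnt_le_card (hp : ∀ γ, 0 ≤ p γ) (i : ι) :
    margEnt Δ p i ≤ ((Δ.image (fun γ => γ i)).card : ℝ) := by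
  unfold margEnt
  have h1 : -∑ α ∈ Δ.image (fun γ => γ i),
      (∑ γ ∈ Δ.filter (fun γ => γ i = α), p γ) *
        Real.log (∑ γ ∈ Δ.filter (fun γ => γ i = α), p γ)
      = ∑ α ∈ Δ.image (fun γ => γ i),
      -((∑ γ ∈ Δ.filter (fun γ => γ i = α), p γ) *
        Real.log (∑ γ ∈ Δ.filter (fun γ => γ i = α), p γ)) := by
    rw [← Finset.sum_neg_distrib]
  rw [h1]
  calc ∑ α ∈ Δ.image (fun γ => γ i),
      -((∑ γ ∈ Δ.filter (fun γ => γ i = α), p γ) *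
        Real.log (∑ γ ∈ Δ.filter (fun γ => γ i = α), p γ))
      ≤ ∑ _α ∈ Δ.image (fun γ => γ i), (1:ℝ) :=
        Finset.sum_le_sum fun α _ =>
          neg_mul_log_le_one (Finset.sum_nonneg fun γ _ => hp γ)
    _ = ((Δ.image (fun γ => γ i)).card : ℝ) := by simp

lemma margEnt_eq_zero_of_const (hsum : (∑ γ ∈ Δ, p γ) = 1) {i : ι} {a : ℤ}
    (hconst : ∀ γ, p γ ≠ 0 → γ i = a) : margEnt Δ p i = 0 := by
  unfold margEnt
  rw [neg_eq_zero]
  apply Finset.sum_eq_zero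
  intro α _
  by_cases hval : α = a
  · subst hval
    have h : ∑ γ ∈ Δ.filter (fun γ => γ i = α), p γ = ∑ γ ∈ Δ, p γ :=
      Finset.sum_filter_of_ne (fun γ _ hpγ => hconst γ hpγ)
    rw [h, hsum]; simp
  · have h : ∑ γ ∈ Δ.filter (fun γ => γ i = α), p γ = 0 := by
      apply Finset.sum_eq_zero
      intro γ hγ
      rw [Finset.mem_filter] at hγ
      by_contra hne
      exact hval (hγ.2 ▸ (hconst γ hne))
    rw [h]; simp

lemma exists_const_coord [Nonempty ι] {M : Finset (ι → ℤ)}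
    (hM : M.Nonempty) (h0 : HSet M = 0) : ∃ i, ∀ u ∈ M, ∀ v ∈ M, u i = v i := by
  by_contra hc
  push_neg at hc
  set p : (ι → ℤ) → ℝ := fun γ => if γ ∈ M then ((M.card : ℝ))⁻¹ else 0 with hpdef
  have hcard : (0:ℝ) < (M.card : ℝ) := by exact_mod_cast Finset.card_pos.2 hM
  have hp0 : ∀ γ, 0 ≤ p γ := by
    intro γ; simp only [hpdef]; split_ifs
    · positivity
    · exact le_rfl
  have hpsupp : ∀ γ, p γ ≠ 0 → γ ∈ M := by
    intro γ h
    by_contra hn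
    exact h (by simp [hpdef, hn])
  have hsum : ∑ γ ∈ M, p γ = 1 := by
    rw [Finset.sum_congr rfl (fun γ hγ => if_pos hγ), Finset.sum_const, nsmul_eq_mul,
      mul_inv_cancel₀ (ne_of_gt hcard)]
  have hpos : ∀ i, 0 < margEnt M p i := by
    intro i
    unfold margEnt
    rw [neg_pos]
    apply Finset.sum_neg ?_ (hM.image _)
    intro α hα
    have hqval : (∑ γ ∈ M.filter (fun γ => γ i = α), p γ)
        = ((M.filter (fun γ => γ i = α)).card : ℝ) * ((M.card : ℝ))⁻¹ := by
      rw [Finset.sum_congr rfl (fun γ hγ => if_pos (Finset.mem_filter.1 hγ).1),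
        Finset.sum_const, nsmul_eq_mul]
    have hfne : (M.filter (fun γ => γ i = α)).Nonempty := by
      obtain ⟨γ, hγ, hγα⟩ := Finset.mem_image.1 hα
      exact ⟨γ, Finset.mem_filter.2 ⟨hγ, hγα⟩⟩
    have hflt : (M.filter (fun γ => γ i = α)).card < M.card := by
      apply Finset.card_lt_card
      refine ⟨Finset.filter_subset _ _, fun hcon => ?_⟩
      obtain ⟨u, huM, v, hvM, huv⟩ := hc i
      by_cases hu : u i = α
      · have := (Finset.mem_filter.1 (hcon hvM)).2
        exact huv (by rw [hu, this])
      · exact hu (Finset.mem_filter.1 (hcon huM)).2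
    have hq0 : 0 < (∑ γ ∈ M.filter (fun γ => γ i = α), p γ) := by
      rw [hqval]
      have hcc : (0:ℝ) < ((M.filter (fun γ => γ i = α)).card : ℝ) := by
        exact_mod_cast Finset.card_pos.2 hfne
      positivity
    have hq1 : (∑ γ ∈ M.filter (fun γ => γ i = α), p γ) < 1 := by
      rw [hqval, ← div_eq_mul_inv, div_lt_one hcard]
      exact_mod_cast hflt
    exact mul_neg_of_pos_of_neg hq0 (Real.log_neg hq0 hq1)
  obtain ⟨i₀, _, hmin⟩ := Finset.exists_min_image Finset.univ (margEnt M p)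
    ⟨Classical.arbitrary ι, Finset.mem_univ _⟩
  have heinf : margEnt M p i₀ ≤ ⨅ i, margEnt M p i :=
    le_ciInf (fun i => hmin i (Finset.mem_univ i))
  have hepos : 0 < ⨅ i, margEnt M p i := lt_of_lt_of_le (hpos i₀) heinf
  have hmem : (⨅ i, margEnt M p i) ∈ {e : ℝ | ∃ p : (ι → ℤ) → ℝ, (∀ γ, 0 ≤ p γ) ∧
      (∀ γ, p γ ≠ 0 → γ ∈ M) ∧ (∑ γ ∈ M, p γ) = 1 ∧ e = ⨅ i, margEnt M p i} :=
    ⟨p, hp0, hpsupp, hsum, rfl⟩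
  have hbdd : BddAbove {e : ℝ | ∃ p : (ι → ℤ) → ℝ, (∀ γ, 0 ≤ p γ) ∧
      (∀ γ, p γ ≠ 0 → γ ∈ M) ∧ (∑ γ ∈ M, p γ) = 1 ∧ e = ⨅ i, margEnt M p i} := by
    refine ⟨((M.image (fun γ => γ (Classical.arbitrary ι))).card : ℝ), ?_⟩
    rintro e ⟨q, hq0, hqsupp, hqsum, rfl⟩
    calc (⨅ i, margEnt M q i) ≤ margEnt M q (Classical.arbitrary ι) :=
          ciInf_le ((Set.finite_range _).bddBelow) _
      _ ≤ _ := margEnt_le_card hq0 _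
  have hfin : 0 < HSet M := lt_of_lt_of_le hepos (le_csSup hbdd hmem)
  rw [h0] at hfin
  exact lt_irrefl 0 hfin

lemma spread_of_HSet_ne_zero {Δ : Finset (ι → ℤ)} (h : HSet Δ ≠ 0) :
    ∃ Δ' : Finset (ι → ℤ), Δ'.Nonempty ∧ Δ' ⊆ Δ ∧
      ∀ i, ∃ u ∈ Δ', ∃ v ∈ Δ', u i ≠ v i := by
  have hHS : HSet Δ = sSup {e : ℝ | ∃ p : (ι → ℤ) → ℝ, (∀ γ, 0 ≤ p γ) ∧
      (∀ γ, p γ ≠ 0 → γ ∈ Δ) ∧ (∑ γ ∈ Δ, p γ) = 1 ∧ e = ⨅ i, margEnt Δ p i} := rfl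
  set S := {e : ℝ | ∃ p : (ι → ℤ) → ℝ, (∀ γ, 0 ≤ p γ) ∧
      (∀ γ, p γ ≠ 0 → γ ∈ Δ) ∧ (∑ γ ∈ Δ, p γ) = 1 ∧ e = ⨅ i, margEnt Δ p i} with hSdef
  have hSne : S.Nonempty := by
    by_contra h'
    rw [Set.not_nonempty_iff_eq_empty] at h'
    rw [hHS, h', Real.sSup_empty] at h
    exact h rfl
  obtain ⟨e, heS, hene⟩ : ∃ e ∈ S, e ≠ 0 := by
    by_contra h'
    push_neg at h'
    apply h
    rw [hHS]
    have h0S : (0:ℝ) ∈ S := by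
      obtain ⟨e₀, he₀⟩ := hSne
      exact h' e₀ he₀ ▸ he₀
    have hS0 : S = {0} := Set.eq_singleton_iff_unique_mem.2 ⟨h0S, fun e he => h' e he⟩
    rw [hS0, csSup_singleton]
  obtain ⟨p, hp0, hpsupp, hpsum, hee⟩ := heS
  obtain ⟨γ₀, hγ₀⟩ : ∃ γ₀, p γ₀ ≠ 0 := by
    by_contra h'
    push_neg at h'
    rw [Finset.sum_eq_zero (fun γ _ => h' γ)] at hpsum
    exact one_ne_zero hpsum.symm
  refine ⟨Δ.filter (fun γ => p γ ≠ 0), ⟨γ₀, Finset.mem_filter.2 ⟨hpsupp γ₀ hγ₀, hγ₀⟩⟩,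
    Finset.filter_subset _ _, ?_⟩
  intro i
  by_contra h'
  push_neg at h'
  haveI : Nonempty ι := ⟨i⟩
  have hconst : ∀ γ, p γ ≠ 0 → γ i = γ₀ i := by
    intro γ hγ
    exact h' γ (Finset.mem_filter.2 ⟨hpsupp γ hγ, hγ⟩) γ₀
      (Finset.mem_filter.2 ⟨hpsupp γ₀ hγ₀, hγ₀⟩)
  have hz : margEnt Δ p i = 0 := margEnt_eq_zero_of_const hpsum hconst
  have hle : (⨅ j, margEnt Δ p j) ≤ 0 := by
    rw [← hz]; exact ciInf_le ((Set.finite_range _).bddBelow) i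
  have hge : (0:ℝ) ≤ ⨅ j, margEnt Δ p j :=
    le_ciInf (fun j => margEnt_nonneg hp0 hpsum j)
  exact hene (hee.trans (le_antisymm hle hge))

end Entropy

/-- The mixed order family used for smaller sections: `z` on top at coordinate `o`
(`w` second), `x i` on top at the remaining `I`-coordinates, `σ` elsewhere. -/
def mixOrd {k : ℕ} (I E : Finset (Fin k)) (o : Fin k) (z w : ℤ) (x : Fin k → ℤ)
    (σ : {i : Fin k // i ∉ I} → LinearOrder ℤ) : {i : Fin k // i ∉ E} → LinearOrder ℤ :=
  fun i => if i.1 = o then ord2 z w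
    else if h : i.1 ∈ I then ord2 (x i.1) (x i.1) else σ ⟨i.1, h⟩

lemma mixOrd_o {k : ℕ} {I E : Finset (Fin k)} {o : Fin k} {z w : ℤ} {x : Fin k → ℤ}
    {σ : {i : Fin k // i ∉ I} → LinearOrder ℤ} {i : {i : Fin k // i ∉ E}} (h : i.1 = o) :
    mixOrd I E o z w x σ i = ord2 z w := by
  simp [mixOrd, h]

lemma mixOrd_I {k : ℕ} {I E : Finset (Fin k)} {o : Fin k} {z w : ℤ} {x : Fin k → ℤ}
    {σ : {i : Fin k // i ∉ I} → LinearOrder ℤ} {i : {i : Fin k // i ∉ E}}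
    (h1 : i.1 ≠ o) (h2 : i.1 ∈ I) :
    mixOrd I E o z w x σ i = ord2 (x i.1) (x i.1) := by
  simp [mixOrd, h1, h2]

lemma mixOrd_J {k : ℕ} {I E : Finset (Fin k)} {o : Fin k} {z w : ℤ} {x : Fin k → ℤ}
    {σ : {i : Fin k // i ∉ I} → LinearOrder ℤ} {i : {i : Fin k // i ∉ E}}
    (h1 : i.1 ≠ o) (h2 : i.1 ∉ I) :
    mixOrd I E o z w x σ i = σ ⟨i.1, h2⟩ := by
  simp [mixOrd, h1, h2]

/-- Elements of `Γ` matching `x` on all of `I` whose outer restriction is maximal in the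
section restrict to maximal elements of any smaller section for a mixed order. -/
lemma dom_lemma {k : ℕ} {Γ : Finset (Fin k → ℤ)} {I : Finset (Fin k)} {x : Fin k → ℤ}
    {σ : {i : Fin k // i ∉ I} → LinearOrder ℤ} {o : Fin k} (hoI : o ∈ I)
    {E : Finset (Fin k)} (hEsub : E ⊆ I.erase o) {z : ℤ}
    {γε : Fin k → ℤ} (hγεΓ : γε ∈ Γ) (hγεI : ∀ i ∈ I, γε i = x i)
    (hεΔ : (fun j : {i : Fin k // i ∉ I} => γε j.1) ∈ maxElems σ (sect Γ I x))
    (hside : z ≠ x o → ∀ γ' ∈ Γ, γ' o = z → (∀ i ∈ I.erase o, γ' i = x i) →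
      (∀ j : {i : Fin k // i ∉ I}, (σ j).le (γε j.1) (γ' j.1)) → False) :
    (fun i : {i : Fin k // i ∉ E} => γε i.1) ∈
      maxElems (mixOrd I E o z (x o) x σ) (sect Γ E x) := by
  have hoE : o ∉ E := fun h => Finset.notMem_erase o I (hEsub h)
  rw [mem_maxElems]
  constructor
  · exact mem_sect.2 ⟨γε, hγεΓ,
      fun i hi => hγεI i (Finset.mem_of_mem_erase (hEsub hi)), fun j => rfl⟩
  · intro v hv hle
    obtain ⟨γ', hγ'Γ, hγ'E, hγ'v⟩ := mem_sect.1 hv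
    have hle' : ∀ i : {i : Fin k // i ∉ E},
        (mixOrd I E o z (x o) x σ i).le (γε i.1) (γ' i.1) := by
      intro i
      have h := hle i
      rw [← hγ'v i] at h
      exact h
    have h_oz : (ord2 z (x o)).le (x o) (γ' o) := by
      have h : (mixOrd I E o z (x o) x σ ⟨o, hoE⟩).le (γε o) (γ' o) := hle' ⟨o, hoE⟩
      rw [mixOrd_o (i := ⟨o, hoE⟩) (show ((⟨o, hoE⟩ : {i : Fin k // i ∉ E})).1 = o from rfl),
        hγεI o hoI] at h
      exact h
    have hγ'R : ∀ i ∈ I.erase o, γ' i = x i := by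
      intro i hi
      rcases Finset.mem_erase.1 hi with ⟨hio, hiI⟩
      by_cases hiE : i ∈ E
      · exact hγ'E i hiE
      · have h : (mixOrd I E o z (x o) x σ ⟨i, hiE⟩).le (γε i) (γ' i) := hle' ⟨i, hiE⟩
        rw [mixOrd_I (i := ⟨i, hiE⟩) hio hiI, hγεI i hiI] at h
        rcases ord2_snd_le h with h' | h' <;> exact h'
    have hγ'J : ∀ j : {i : Fin k // i ∉ I}, (σ j).le (γε j.1) (γ' j.1) := by
      intro j
      have hjE : j.1 ∉ E := fun hc => j.2 (Finset.mem_of_mem_erase (hEsub hc))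
      have hjo : j.1 ≠ o := fun hc => j.2 (hc ▸ hoI)
      have h : (mixOrd I E o z (x o) x σ ⟨j.1, hjE⟩).le (γε j.1) (γ' j.1) := hle' ⟨j.1, hjE⟩
      rw [mixOrd_J (i := ⟨j.1, hjE⟩) hjo j.2] at h
      exact h
    have hfinish : γ' o = x o → (fun i : {i : Fin k // i ∉ E} => γε i.1) = v := by
      intro hγ'o
      have hγ'I : ∀ i ∈ I, γ' i = x i := by
        intro i hi
        by_cases hio : i = o
        · rw [hio, hγ'o]
        · exact hγ'R i (Finset.mem_erase.2 ⟨hio, hi⟩)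
      have hθS : (fun j : {i : Fin k // i ∉ I} => γ' j.1) ∈ sect Γ I x :=
        mem_sect.2 ⟨γ', hγ'Γ, hγ'I, fun j => rfl⟩
      have heq : (fun j : {i : Fin k // i ∉ I} => γε j.1) = (fun j => γ' j.1) :=
        (mem_maxElems.1 hεΔ).2 _ hθS (fun j => hγ'J j)
      funext i
      show γε i.1 = v i
      rw [← hγ'v i]
      by_cases hio : i.1 = o
      · rw [hio, hγεI o hoI, hγ'o]
      · by_cases hiI : i.1 ∈ I
        · rw [hγεI i.1 hiI, hγ'R i.1 (Finset.mem_erase.2 ⟨hio, hiI⟩)]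
        · exact congrFun heq ⟨i.1, hiI⟩
    rcases ord2_snd_le h_oz with hvo | hvo
    · by_cases hzx : z = x o
      · exact hfinish (hzx ▸ hvo)
      · exact (hside hzx γ' hγ'Γ hvo hγ'R hγ'J).elim
    · exact hfinish hvo

/-- Elements of `Γ` with `z` at coordinate `o`, matching `x` on `I \ {o}`, maximal among
such, restrict to maximal elements of smaller sections for the mixed order. -/
lemma dom_lemmaT {k : ℕ} {Γ : Finset (Fin k → ℤ)} {I : Finset (Fin k)} {x : Fin k → ℤ}
    {σ : {i : Fin k // i ∉ I} → LinearOrder ℤ} {o : Fin k} (hoI : o ∈ I)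
    {E : Finset (Fin k)} (hEsub : E ⊆ I.erase o) {z : ℤ}
    {γη : Fin k → ℤ} (hγηΓ : γη ∈ Γ) (hγηo : γη o = z)
    (hγηI₁ : ∀ i ∈ I.erase o, γη i = x i)
    (hmax : ∀ γ' ∈ Γ, γ' o = z → (∀ i ∈ I.erase o, γ' i = x i) →
      (∀ j : {i : Fin k // i ∉ I}, (σ j).le (γη j.1) (γ' j.1)) →
      ∀ j : {i : Fin k // i ∉ I}, γη j.1 = γ' j.1) :
    (fun i : {i : Fin k // i ∉ E} => γη i.1) ∈
      maxElems (mixOrd I E o z (x o) x σ) (sect Γ E x) := by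
  have hoE : o ∉ E := fun h => Finset.notMem_erase o I (hEsub h)
  rw [mem_maxElems]
  constructor
  · exact mem_sect.2 ⟨γη, hγηΓ, fun i hi => hγηI₁ i (hEsub hi), fun j => rfl⟩
  · intro v hv hle
    obtain ⟨γ', hγ'Γ, hγ'E, hγ'v⟩ := mem_sect.1 hv
    have hle' : ∀ i : {i : Fin k // i ∉ E},
        (mixOrd I E o z (x o) x σ i).le (γη i.1) (γ' i.1) := by
      intro i
      have h := hle i
      rw [← hγ'v i] at h
      exact h
    have hγ'o : γ' o = z := by
      have h : (mixOrd I E o z (x o) x σ ⟨o, hoE⟩).le (γη o) (γ' o) := hle' ⟨o, hoE⟩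
      rw [mixOrd_o (i := ⟨o, hoE⟩) (show ((⟨o, hoE⟩ : {i : Fin k // i ∉ E})).1 = o from rfl),
        hγηo] at h
      exact ord2_top_le h
    have hγ'R : ∀ i ∈ I.erase o, γ' i = x i := by
      intro i hi
      rcases Finset.mem_erase.1 hi with ⟨hio, hiI⟩
      by_cases hiE : i ∈ E
      · exact hγ'E i hiE
      · have h : (mixOrd I E o z (x o) x σ ⟨i, hiE⟩).le (γη i) (γ' i) := hle' ⟨i, hiE⟩
        rw [mixOrd_I (i := ⟨i, hiE⟩) hio hiI, hγηI₁ i hi] at h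
        rcases ord2_snd_le h with h' | h' <;> exact h'
    have hγ'J : ∀ j : {i : Fin k // i ∉ I}, (σ j).le (γη j.1) (γ' j.1) := by
      intro j
      have hjE : j.1 ∉ E := fun hc => j.2 (Finset.mem_of_mem_erase (hEsub hc))
      have hjo : j.1 ≠ o := fun hc => j.2 (hc ▸ hoI)
      have h : (mixOrd I E o z (x o) x σ ⟨j.1, hjE⟩).le (γη j.1) (γ' j.1) := hle' ⟨j.1, hjE⟩
      rw [mixOrd_J (i := ⟨j.1, hjE⟩) hjo j.2] at h
      exact h
    have hJeq := hmax γ' hγ'Γ hγ'o hγ'R hγ'J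
    funext i
    show γη i.1 = v i
    rw [← hγ'v i]
    by_cases hio : i.1 = o
    · rw [hio, hγηo, hγ'o]
    · by_cases hiI : i.1 ∈ I
      · rw [hγηI₁ i.1 (Finset.mem_erase.2 ⟨hio, hiI⟩), hγ'R i.1 (Finset.mem_erase.2 ⟨hio, hiI⟩)]
      · exact hJeq ⟨i.1, hiI⟩


/-- Lemma `TrasportoAnticatena`: with `I = {1,…,k-d}`, if the section
`Γ_I^x` has an ordering with nonzero entropy of maximal elements while all strictly
smaller sections have zero entropy for every ordering, then the maximal elements of
`Γ_I^x` are contained in `Γ_I^{(z₁, x̄)}` for every `z₁ ∈ P₁`. -/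
theorem stmt13 {k d : ℕ} (hk : 2 ≤ k) (hd1 : 1 ≤ d) (hd2 : d ≤ k - 1)
    (Γ : Finset (Fin k → ℤ))
    (I : Finset (Fin k)) (hI : I = Finset.univ.filter (fun i : Fin k => (i : ℕ) < k - d))
    (x : Fin k → ℤ) (hx : ∀ i ∈ I, x i ∈ Γ.image (fun γ => γ i))
    (σ : {i : Fin k // i ∉ I} → LinearOrder ℤ)
    (ha : HSet (maxElems σ (sect Γ I x)) ≠ 0)
    (hb : ∀ I' : Finset (Fin k), I' ⊂ I →
      ∀ α : {i : Fin k // i ∉ I'} → LinearOrder ℤ,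
        HSet (maxElems α (sect Γ I' x)) = 0) :
    ∀ z₁ ∈ Γ.image (fun γ => γ (⟨0, by omega⟩ : Fin k)),
      maxElems σ (sect Γ I x) ⊆
        sect Γ I (Function.update x (⟨0, by omega⟩ : Fin k) z₁) := by
  intro z₁ hz₁
  have hok : 0 < k := by omega
  set o : Fin k := ⟨0, by omega⟩ with ho
  have honeI : o ∈ I := by
    rw [hI]
    simp only [Finset.mem_filter, Finset.mem_univ, true_and]
    show (0 : ℕ) < k - d
    omega
  show maxElems σ (sect Γ I x) ⊆ sect Γ I (Function.update x o z₁)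
  by_cases hzx : z₁ = x o
  · rw [hzx, Function.update_eq_self]
    exact maxElems_subset
  -- z₁ ≠ x o from here on
  obtain ⟨γz, hγzΓ, hγzo'⟩ := Finset.mem_image.1 hz₁
  have hγzo : γz o = z₁ := hγzo'
  have hI₁ss : I.erase o ⊂ I := Finset.erase_ssubset honeI
  haveI hι₁ : Nonempty {i : Fin k // i ∉ I.erase o} := ⟨⟨o, Finset.notMem_erase o I⟩⟩
  set o₁ : {i : Fin k // i ∉ I.erase o} := ⟨o, Finset.notMem_erase o I⟩ with ho₁
  have hJlastnI : (⟨k-1, by omega⟩ : Fin k) ∉ I := by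
    rw [hI]
    simp only [Finset.mem_filter, Finset.mem_univ, true_and, not_lt]
    show k - d ≤ k - 1
    omega
  haveI hJne : Nonempty {i : Fin k // i ∉ I} := ⟨⟨⟨k-1, by omega⟩, hJlastnI⟩⟩
  obtain ⟨Δs, hΔsne, hΔssub, hspread⟩ := spread_of_HSet_ne_zero ha
  obtain ⟨w₀, hw₀⟩ := hΔsne
  have hw₀Δ : w₀ ∈ maxElems σ (sect Γ I x) := hΔssub hw₀
  have hwitness : ∀ w ∈ maxElems σ (sect Γ I x), ∃ γ ∈ Γ, (∀ i ∈ I, γ i = x i) ∧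
      (fun j : {i : Fin k // i ∉ I} => γ j.1) = w := by
    intro w hw
    obtain ⟨γ, hγΓ, hγI, hγJ⟩ := mem_sect.1 (maxElems_subset hw)
    exact ⟨γ, hγΓ, hγI, funext hγJ⟩
  obtain ⟨γ₀', hγ₀'Γ, hγ₀'I, hγ₀'w⟩ := hwitness w₀ hw₀Δ
  -- membership facts for T := sect Γ I (update x o z₁)
  have hTmem' : ∀ γ ∈ Γ, γ o = z₁ → (∀ i ∈ I.erase o, γ i = x i) →
      (fun j : {i : Fin k // i ∉ I} => γ j.1) ∈ sect Γ I (Function.update x o z₁) := by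
    intro γ hγΓ hγo hγI₁
    refine mem_sect.2 ⟨γ, hγΓ, ?_, fun j => rfl⟩
    intro i hi
    by_cases hio : i = o
    · rw [hio, Function.update_self, hγo]
    · rw [Function.update_of_ne hio, hγI₁ i (Finset.mem_erase.2 ⟨hio, hi⟩)]
  have hTmem : ∀ v ∈ sect Γ I (Function.update x o z₁), ∃ γ ∈ Γ, γ o = z₁ ∧
      (∀ i ∈ I.erase o, γ i = x i) ∧ ∀ j : {i : Fin k // i ∉ I}, γ j.1 = v j := by
    intro v hv
    obtain ⟨γ, hγΓ, hγI, hγJ⟩ := mem_sect.1 hv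
    refine ⟨γ, hγΓ, ?_, fun i hi => ?_, hγJ⟩
    · have h := hγI o honeI
      rwa [Function.update_self] at h
    · have h2 := hγI i (Finset.mem_of_mem_erase hi)
      rwa [Function.update_of_ne (Finset.mem_erase.1 hi).1] at h2
  -- Δ-elements restrict to maximal elements for the x-o-top order α₀
  have hdom0 : ∀ w ∈ maxElems σ (sect Γ I x), ∀ γ, γ ∈ Γ → (∀ i ∈ I, γ i = x i) →
      ((fun j : {i : Fin k // i ∉ I} => γ j.1) = w) →
      (fun i : {i : Fin k // i ∉ I.erase o} => γ i.1) ∈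
        maxElems (mixOrd I (I.erase o) o (x o) (x o) x σ) (sect Γ (I.erase o) x) := by
    intro w hw γ hγΓ hγI hγw
    exact dom_lemma honeI subset_rfl hγΓ hγI (by rw [hγw]; exact hw)
      (fun hne => absurd rfl hne)
  have hM₀ne : (maxElems (mixOrd I (I.erase o) o (x o) (x o) x σ)
      (sect Γ (I.erase o) x)).Nonempty :=
    ⟨_, hdom0 w₀ hw₀Δ γ₀' hγ₀'Γ hγ₀'I hγ₀'w⟩
  obtain ⟨c₀, hc₀⟩ := exists_const_coord hM₀ne
    (hb (I.erase o) hI₁ss (mixOrd I (I.erase o) o (x o) (x o) x σ))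
  have hc₀o : c₀.1 = o := by
    by_contra hne
    have hc₀I : c₀.1 ∉ I := fun hmem => c₀.2 (Finset.mem_erase.2 ⟨hne, hmem⟩)
    obtain ⟨u, hus, v, hvs, huv⟩ := hspread ⟨c₀.1, hc₀I⟩
    obtain ⟨γu, hγuΓ, hγuI, hγuw⟩ := hwitness u (hΔssub hus)
    obtain ⟨γv, hγvΓ, hγvI, hγvw⟩ := hwitness v (hΔssub hvs)
    have h1 : γu c₀.1 = γv c₀.1 :=
      hc₀ _ (hdom0 u (hΔssub hus) γu hγuΓ hγuI hγuw)
        _ (hdom0 v (hΔssub hvs) γv hγvΓ hγvI hγvw)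
    apply huv
    have hu' : γu c₀.1 = u ⟨c₀.1, hc₀I⟩ := congrFun hγuw ⟨c₀.1, hc₀I⟩
    have hv' : γv c₀.1 = v ⟨c₀.1, hc₀I⟩ := congrFun hγvw ⟨c₀.1, hc₀I⟩
    rw [← hu', ← hv']
    exact h1
  have hc₀eq : c₀ = o₁ := Subtype.ext hc₀o
  rw [hc₀eq] at hc₀
  -- transport along α₀ : everything in the big section is σ-dominated by some Δ-element
  have htrans : ∀ γ' ∈ Γ, (∀ i ∈ I.erase o, γ' i = x i) →
      ∃ ε ∈ maxElems σ (sect Γ I x), ∀ j : {i : Fin k // i ∉ I}, (σ j).le (γ' j.1) (ε j) := by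
    intro γ' hγ'Γ hγ'I₁
    have hu'mem : (fun i : {i : Fin k // i ∉ I.erase o} => γ' i.1) ∈ sect Γ (I.erase o) x :=
      mem_sect.2 ⟨γ', hγ'Γ, hγ'I₁, fun j => rfl⟩
    obtain ⟨wM, hwM, hlew⟩ :=
      exists_le_maxElems (mixOrd I (I.erase o) o (x o) (x o) x σ) _ hu'mem
    have hwo : wM o₁ = x o := by
      have h := hc₀ wM hwM _ (hdom0 w₀ hw₀Δ γ₀' hγ₀'Γ hγ₀'I hγ₀'w)
      have h2 : wM o₁ = γ₀' o := h
      rw [h2]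
      exact hγ₀'I o honeI
    obtain ⟨γw, hγwΓ, hγwI₁, hγwJ⟩ := mem_sect.1 (maxElems_subset hwM)
    have hγwo : γw o = x o := by
      have h : γw o = wM o₁ := hγwJ o₁
      rw [h, hwo]
    have hγwI : ∀ i ∈ I, γw i = x i := by
      intro i hi
      by_cases hio : i = o
      · rw [hio, hγwo]
      · exact hγwI₁ i (Finset.mem_erase.2 ⟨hio, hi⟩)
    have hεS : (fun j : {i : Fin k // i ∉ I} => γw j.1) ∈ sect Γ I x :=
      mem_sect.2 ⟨γw, hγwΓ, hγwI, fun j => rfl⟩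
    have hεΔ : (fun j : {i : Fin k // i ∉ I} => γw j.1) ∈ maxElems σ (sect Γ I x) := by
      rw [mem_maxElems]
      refine ⟨hεS, fun θ hθS hleθ => ?_⟩
      obtain ⟨γθ, hγθΓ, hγθI, hγθJ⟩ := mem_sect.1 hθS
      have hvθmem : (fun i : {i : Fin k // i ∉ I.erase o} => γθ i.1) ∈ sect Γ (I.erase o) x :=
        mem_sect.2 ⟨γθ, hγθΓ, fun i hi => hγθI i (Finset.mem_of_mem_erase hi), fun j => rfl⟩
      have hwle : ∀ i : {i : Fin k // i ∉ I.erase o},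
          (mixOrd I (I.erase o) o (x o) (x o) x σ i).le (wM i) (γθ i.1) := by
        intro i
        by_cases hio : i.1 = o
        · have hveq : γθ i.1 = wM i := by
            rw [show i = o₁ from Subtype.ext hio]
            show γθ o = wM o₁
            rw [hγθI o honeI, hwo]
          rw [hveq]
          exact (mixOrd I (I.erase o) o (x o) (x o) x σ i).le_refl _
        · have hiI : i.1 ∉ I := fun hmem => i.2 (Finset.mem_erase.2 ⟨hio, hmem⟩)
          have h := hleθ ⟨i.1, hiI⟩
          have h2 : (σ ⟨i.1, hiI⟩).le (γw i.1) (θ ⟨i.1, hiI⟩) := h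
          rw [mixOrd_J (i := i) hio hiI]
          have e1 : γw i.1 = wM i := hγwJ i
          have e2 : γθ i.1 = θ ⟨i.1, hiI⟩ := hγθJ ⟨i.1, hiI⟩
          rw [← e1, e2]
          exact h2
      have hweq := (mem_maxElems.1 hwM).2 _ hvθmem hwle
      funext j
      have hjE : j.1 ∉ I.erase o := fun hc => j.2 (Finset.mem_of_mem_erase hc)
      have e1 : γw j.1 = wM ⟨j.1, hjE⟩ := hγwJ ⟨j.1, hjE⟩
      have e2 : wM ⟨j.1, hjE⟩ = γθ j.1 := congrFun hweq ⟨j.1, hjE⟩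
      have e3 : γθ j.1 = θ j := hγθJ j
      show γw j.1 = θ j
      rw [e1, e2, e3]
    refine ⟨_, hεΔ, fun j => ?_⟩
    have hjE : j.1 ∉ I.erase o := fun hc => j.2 (Finset.mem_of_mem_erase hc)
    have hjo : j.1 ≠ o := fun hc => j.2 (hc ▸ honeI)
    have h : (mixOrd I (I.erase o) o (x o) (x o) x σ ⟨j.1, hjE⟩).le (γ' j.1) (wM ⟨j.1, hjE⟩) :=
      hlew ⟨j.1, hjE⟩
    rw [mixOrd_J (i := ⟨j.1, hjE⟩) hjo j.2] at h
    have e1 : γw j.1 = wM ⟨j.1, hjE⟩ := hγwJ ⟨j.1, hjE⟩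
    show (σ j).le (γ' j.1) ((fun j : {i : Fin k // i ∉ I} => γw j.1) j)
    show (σ j).le (γ' j.1) (γw j.1)
    rw [e1]
    exact h
  -- Lemma B : the z₁-section of the bar-slice is nonempty
  have hTne : ∃ γT ∈ Γ, γT o = z₁ ∧ ∀ i ∈ I.erase o, γT i = x i := by
    by_contra hcon
    set 𝒞 := (I.erase o).powerset.filter
      (fun E => ∃ γ ∈ Γ, γ o = z₁ ∧ ∀ i ∈ E, γ i = x i) with h𝒞
    have hCempty : ∅ ∈ 𝒞 := Finset.mem_filter.2 ⟨Finset.empty_mem_powerset _,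
      ⟨γz, hγzΓ, hγzo, by simp⟩⟩
    obtain ⟨E, hE𝒞, hEmax⟩ := Finset.exists_max_image 𝒞 Finset.card ⟨∅, hCempty⟩
    rw [h𝒞, Finset.mem_filter, Finset.mem_powerset] at hE𝒞
    obtain ⟨hEsub, γ₀, hγ₀Γ, hγ₀o, hγ₀E⟩ := hE𝒞
    have hoE : o ∉ E := fun h => Finset.notMem_erase o I (hEsub h)
    have hEssI : E ⊂ I := by
      refine (Finset.ssubset_iff_of_subset (hEsub.trans (Finset.erase_subset o I))).2 ?_
      exact ⟨o, honeI, hoE⟩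
    haveI : Nonempty {i : Fin k // i ∉ E} := ⟨⟨o, hoE⟩⟩
    have hdomE : ∀ w ∈ maxElems σ (sect Γ I x), ∀ γ, γ ∈ Γ → (∀ i ∈ I, γ i = x i) →
        ((fun j : {i : Fin k // i ∉ I} => γ j.1) = w) →
        (fun i : {i : Fin k // i ∉ E} => γ i.1) ∈
          maxElems (mixOrd I E o z₁ (x o) x σ) (sect Γ E x) := by
      intro w hw γ hγΓ hγI hγw
      apply dom_lemma honeI hEsub hγΓ hγI (by rw [hγw]; exact hw)
      intro _ γ'' hγ''Γ hγ''o hγ''I₁ _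
      exact hcon ⟨γ'', hγ''Γ, hγ''o, hγ''I₁⟩
    have hMEne : (maxElems (mixOrd I E o z₁ (x o) x σ) (sect Γ E x)).Nonempty :=
      ⟨_, hdomE w₀ hw₀Δ γ₀' hγ₀'Γ hγ₀'I hγ₀'w⟩
    obtain ⟨c, hc⟩ := exists_const_coord hMEne (hb E hEssI (mixOrd I E o z₁ (x o) x σ))
    have hu₀ : (fun i : {i : Fin k // i ∉ E} => γ₀ i.1) ∈ sect Γ E x :=
      mem_sect.2 ⟨γ₀, hγ₀Γ, hγ₀E, fun j => rfl⟩
    obtain ⟨wE, hwE, hlewE⟩ := exists_le_maxElems (mixOrd I E o z₁ (x o) x σ) _ hu₀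
    have hwEo : wE ⟨o, hoE⟩ = z₁ := by
      have h : (mixOrd I E o z₁ (x o) x σ ⟨o, hoE⟩).le (γ₀ o) (wE ⟨o, hoE⟩) := hlewE ⟨o, hoE⟩
      rw [mixOrd_o (i := ⟨o, hoE⟩) (show ((⟨o, hoE⟩ : {i : Fin k // i ∉ E})).1 = o from rfl),
        hγ₀o] at h
      exact ord2_top_le h
    obtain ⟨γw, hγwΓ, hγwE, hγwJ⟩ := mem_sect.1 (maxElems_subset hwE)
    have hγwo : γw o = z₁ := by
      have h : γw o = wE ⟨o, hoE⟩ := hγwJ ⟨o, hoE⟩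
      rw [h, hwEo]
    by_cases hcJ : c.1 ∈ I
    · by_cases hco : c.1 = o
      · -- constant coordinate is o : but values x o and z₁ both occur
        have h1 : γ₀' c.1 = wE c :=
          hc _ (hdomE w₀ hw₀Δ γ₀' hγ₀'Γ hγ₀'I hγ₀'w) wE hwE
        have hceq : c = ⟨o, hoE⟩ := Subtype.ext hco
        rw [hceq] at h1
        have h2 : γ₀' o = x o := hγ₀'I o honeI
        rw [hwEo] at h1
        exact hzx (by rw [← h1, h2])
      · -- constant coordinate inside I.erase o : enlarge E
        have hcI₁ : c.1 ∈ I.erase o := Finset.mem_erase.2 ⟨hco, hcJ⟩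
        have hcE : c.1 ∉ E := c.2
        have h1 : wE c = γ₀' c.1 :=
          hc wE hwE _ (hdomE w₀ hw₀Δ γ₀' hγ₀'Γ hγ₀'I hγ₀'w)
        have hγwc : γw c.1 = x c.1 := by
          have e1 : γw c.1 = wE c := hγwJ c
          rw [e1, h1]
          exact hγ₀'I c.1 hcJ
        have hnew : insert c.1 E ∈ 𝒞 := by
          rw [h𝒞, Finset.mem_filter, Finset.mem_powerset]
          refine ⟨Finset.insert_subset hcI₁ hEsub, γw, hγwΓ, hγwo, ?_⟩
          intro i hi
          rcases Finset.mem_insert.1 hi with h | h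
          · rw [h]; exact hγwc
          · exact hγwE i h
        have hcard := hEmax _ hnew
        rw [Finset.card_insert_of_notMem hcE] at hcard
        omega
    · -- constant coordinate outside I : contradicts the spread of Δ
      obtain ⟨u, hus, v, hvs, huv⟩ := hspread ⟨c.1, hcJ⟩
      obtain ⟨γu, hγuΓ, hγuI, hγuw⟩ := hwitness u (hΔssub hus)
      obtain ⟨γv, hγvΓ, hγvI, hγvw⟩ := hwitness v (hΔssub hvs)
      have h1 : γu c.1 = γv c.1 :=
        hc _ (hdomE u (hΔssub hus) γu hγuΓ hγuI hγuw)
          _ (hdomE v (hΔssub hvs) γv hγvΓ hγvI hγvw)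
      apply huv
      have hu' : γu c.1 = u ⟨c.1, hcJ⟩ := congrFun hγuw ⟨c.1, hcJ⟩
      have hv' : γv c.1 = v ⟨c.1, hcJ⟩ := congrFun hγvw ⟨c.1, hcJ⟩
      rw [← hu', ← hv']
      exact h1
  obtain ⟨γT, hγTΓ, hγTo, hγTI₁⟩ := hTne
  have hγTT := hTmem' γT hγTΓ hγTo hγTI₁
  obtain ⟨η, hηTQ, _⟩ := exists_le_maxElems σ (sect Γ I (Function.update x o z₁)) hγTT
  -- the absorption principle
  have hkey : ∀ w ∈ maxElems σ (sect Γ I x), ∀ θ' ∈ sect Γ I (Function.update x o z₁),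
      (∀ j, (σ j).le (w j) (θ' j)) → w = θ' := by
    intro w hw θ' hθ'T hle
    obtain ⟨γθ, hγθΓ, hγθo, hγθI₁, hγθJ⟩ := hTmem θ' hθ'T
    obtain ⟨ε, hεΔ', hθε⟩ := htrans γθ hγθΓ hγθI₁
    have hθ'ε : ∀ j, (σ j).le (θ' j) (ε j) := by
      intro j
      rw [← hγθJ j]
      exact hθε j
    have hwε : ∀ j, (σ j).le (w j) (ε j) := fun j => (σ j).le_trans _ _ _ (hle j) (hθ'ε j)
    have hwe : w = ε := (mem_maxElems.1 hw).2 ε (maxElems_subset hεΔ') hwε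
    refine le_antisymm_pi hle (fun j => ?_)
    rw [hwe]
    exact hθ'ε j
  have habsorb : ∀ w ∈ maxElems σ (sect Γ I x),
      (∃ θ ∈ sect Γ I (Function.update x o z₁), ∀ j, (σ j).le (w j) (θ j)) →
      w ∈ maxElems σ (sect Γ I (Function.update x o z₁)) := by
    rintro w hw ⟨θ, hθT, hwθ⟩
    have hwθ' : w = θ := hkey w hw θ hθT hwθ
    rw [mem_maxElems]
    exact ⟨by rw [hwθ']; exact hθT, fun θ'' hθ'' hle => hkey w hw θ'' hθ'' hle⟩
  -- maximal elements of T restrict to maximal elements for α₁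
  have hdomT : ∀ η' ∈ maxElems σ (sect Γ I (Function.update x o z₁)), ∀ γη, γη ∈ Γ →
      γη o = z₁ → (∀ i ∈ I.erase o, γη i = x i) →
      ((fun j : {i : Fin k // i ∉ I} => γη j.1) = η') →
      (fun i : {i : Fin k // i ∉ I.erase o} => γη i.1) ∈
        maxElems (mixOrd I (I.erase o) o z₁ (x o) x σ) (sect Γ (I.erase o) x) := by
    intro η' hη' γη hγηΓ hγηo hγηI₁ hγηη
    apply dom_lemmaT honeI subset_rfl hγηΓ hγηo hγηI₁
    intro γ' hγ'Γ hγ'o hγ'I₁ hγ'J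
    have hθ'T := hTmem' γ' hγ'Γ hγ'o hγ'I₁
    have hle' : ∀ j, (σ j).le (η' j) ((fun j : {i : Fin k // i ∉ I} => γ' j.1) j) := by
      intro j
      rw [← hγηη]
      exact hγ'J j
    have heq : η' = (fun j : {i : Fin k // i ∉ I} => γ' j.1) :=
      (mem_maxElems.1 hη').2 _ hθ'T hle'
    intro j
    have e1 : γη j.1 = η' j := congrFun hγηη j
    have e2 : η' j = γ' j.1 := congrFun heq j
    rw [e1, e2]
  -- non-dominated Δ-elements restrict to maximal elements for α₁
  have hdom1 : ∀ w ∈ maxElems σ (sect Γ I x), ∀ γ, γ ∈ Γ → (∀ i ∈ I, γ i = x i) →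
      ((fun j : {i : Fin k // i ∉ I} => γ j.1) = w) →
      (¬ ∃ θ ∈ sect Γ I (Function.update x o z₁), ∀ j, (σ j).le (w j) (θ j)) →
      (fun i : {i : Fin k // i ∉ I.erase o} => γ i.1) ∈
        maxElems (mixOrd I (I.erase o) o z₁ (x o) x σ) (sect Γ (I.erase o) x) := by
    intro w hw γ hγΓ hγI hγw hnd
    apply dom_lemma honeI subset_rfl hγΓ hγI (by rw [hγw]; exact hw)
    intro _ γ' hγ'Γ hγ'o hγ'I₁ hγ'J
    refine hnd ⟨_, hTmem' γ' hγ'Γ hγ'o hγ'I₁, fun j => ?_⟩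
    rw [← hγw]
    exact hγ'J j
  obtain ⟨γη, hγηΓ, hγηo, hγηI₁, hγηJ⟩ := hTmem η (maxElems_subset hηTQ)
  have hγηη : (fun j : {i : Fin k // i ∉ I} => γη j.1) = η := funext hγηJ
  have hM₁ne : (maxElems (mixOrd I (I.erase o) o z₁ (x o) x σ)
      (sect Γ (I.erase o) x)).Nonempty :=
    ⟨_, hdomT η hηTQ γη hγηΓ hγηo hγηI₁ hγηη⟩
  obtain ⟨c₁, hc₁⟩ := exists_const_coord hM₁ne
    (hb (I.erase o) hI₁ss (mixOrd I (I.erase o) o z₁ (x o) x σ))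
  have hc₁o : c₁.1 = o := by
    by_contra hne
    have hc₁I : c₁.1 ∉ I := fun hmem => c₁.2 (Finset.mem_erase.2 ⟨hne, hmem⟩)
    have hval : ∀ w ∈ maxElems σ (sect Γ I x), w ⟨c₁.1, hc₁I⟩ = η ⟨c₁.1, hc₁I⟩ := by
      intro w hw
      obtain ⟨γ, hγΓ, hγI, hγw⟩ := hwitness w hw
      by_cases hnd : ∃ θ ∈ sect Γ I (Function.update x o z₁), ∀ j, (σ j).le (w j) (θ j)
      · have hwTQ := habsorb w hw hnd
        obtain ⟨γ', hγ'Γ, hγ'o, hγ'I₁, hγ'J⟩ := hTmem w (maxElems_subset hwTQ)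
        have h : γ' c₁.1 = γη c₁.1 :=
          hc₁ _ (hdomT w hwTQ γ' hγ'Γ hγ'o hγ'I₁ (funext hγ'J))
            _ (hdomT η hηTQ γη hγηΓ hγηo hγηI₁ hγηη)
        have e1 : γ' c₁.1 = w ⟨c₁.1, hc₁I⟩ := hγ'J ⟨c₁.1, hc₁I⟩
        have e2 : γη c₁.1 = η ⟨c₁.1, hc₁I⟩ := hγηJ ⟨c₁.1, hc₁I⟩
        rw [← e1, ← e2]
        exact h
      · have h : γ c₁.1 = γη c₁.1 :=
          hc₁ _ (hdom1 w hw γ hγΓ hγI hγw hnd)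
            _ (hdomT η hηTQ γη hγηΓ hγηo hγηI₁ hγηη)
        have e1 : γ c₁.1 = w ⟨c₁.1, hc₁I⟩ := congrFun hγw ⟨c₁.1, hc₁I⟩
        have e2 : γη c₁.1 = η ⟨c₁.1, hc₁I⟩ := hγηJ ⟨c₁.1, hc₁I⟩
        rw [← e1, ← e2]
        exact h
    obtain ⟨u, hus, v, hvs, huv⟩ := hspread ⟨c₁.1, hc₁I⟩
    exact huv ((hval u (hΔssub hus)).trans (hval v (hΔssub hvs)).symm)
  -- conclusion
  intro δ hδ
  by_cases hnd : ∃ θ ∈ sect Γ I (Function.update x o z₁), ∀ j, (σ j).le (δ j) (θ j)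
  · obtain ⟨θ, hθT, hδθ⟩ := hnd
    have h := hkey δ hδ θ hθT hδθ
    rw [h]
    exact hθT
  · obtain ⟨γ, hγΓ, hγI, hγw⟩ := hwitness δ hδ
    have h : γ c₁.1 = γη c₁.1 :=
      hc₁ _ (hdom1 δ hδ γ hγΓ hγI hγw hnd)
        _ (hdomT η hηTQ γη hγηΓ hγηo hγηI₁ hγηη)
    have hc₁eq : c₁ = o₁ := Subtype.ext hc₁o
    rw [hc₁eq] at h
    have h2 : γ o = γη o := h
    rw [hγI o honeI, hγηo] at h2
    exact absurd h2.symm hzx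


end SlicePaper
end
end

section
/- Let k ≥ 2 be an integer, F a field, S_1,…,S_k finite nonempty subsets of ℤ, c : S_1 × ⋯ × S_k → F a coefficient array with support Γ. Let i ∈ {1,…,k}, let x_i ≠ z_i be two elements of π_i(Γ), and suppose y ∈ Γ_{\{i\}}^{x_i} ∩ Γ_{\{i\}}^{z_i}. Then there exists a change of bases, with N_j the identity matrix for all j ≠ i, such that the support Γ′ of the transformed coefficient array c′ satisfies Γ′_{\{i\}}^{x_i} = Γ_{\{i\}}^{x_i} and y ∉ Γ′_{\{i\}}^{z_i}. -/
open scoped BigOperators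
open Classical

noncomputable section

namespace SlicePaper

lemma mem_support_iff {k : ℕ} {F : Type*} [Field F] (S : Fin k → Finset ℤ)
    (c : (∀ i, {x : ℤ // x ∈ S i}) → F) (γ : Fin k → ℤ) :
    γ ∈ support S c ↔ ∃ s : ∀ i, {x : ℤ // x ∈ S i}, c s ≠ 0 ∧ (fun j => (s j : ℤ)) = γ := by
  simp [support, Finset.mem_image, Finset.mem_filter]

/-- Lemma `CreareBuco`: Gaussian elimination on the `i`-th basis. -/
theorem stmt14 {k : ℕ} (hk : 2 ≤ k) (F : Type*) [Field F]
    (S : Fin k → Finset ℤ) (hS : ∀ i, (S i).Nonempty)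
    (c : (∀ i, {x : ℤ // x ∈ S i}) → F)
    (i : Fin k) (xa za : ℤ)
    (hxa : xa ∈ (support S c).image (fun γ => γ i))
    (hza : za ∈ (support S c).image (fun γ => γ i))
    (hne : xa ≠ za)
    (y : {j : Fin k // j ≠ i} → ℤ)
    (hy : y ∈ sect1 (support S c) i xa ∧ y ∈ sect1 (support S c) i za) :
    ∃ N : ∀ j : Fin k, Matrix {x : ℤ // x ∈ S j} {x : ℤ // x ∈ S j} F,
      (∀ j, IsUnit (N j)) ∧ (∀ j, j ≠ i → N j = 1) ∧
      (sect1 (support S (fun s => ∑ t : ∀ j, {x : ℤ // x ∈ S j},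
          (∏ j, N j (s j) (t j)) * c t)) i xa = sect1 (support S c) i xa ∧
       y ∉ sect1 (support S (fun s => ∑ t : ∀ j, {x : ℤ // x ∈ S j},
          (∏ j, N j (s j) (t j)) * c t)) i za) := by
  classical
  obtain ⟨hy1, hy2⟩ := hy
  rw [sect1, Finset.mem_image] at hy1 hy2
  obtain ⟨γ1, hγ1, hγ1y⟩ := hy1
  obtain ⟨γ2, hγ2, hγ2y⟩ := hy2
  rw [Finset.mem_filter] at hγ1 hγ2
  obtain ⟨hγ1Γ, hγ1i⟩ := hγ1
  obtain ⟨hγ2Γ, hγ2i⟩ := hγ2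
  rw [mem_support_iff] at hγ1Γ hγ2Γ
  obtain ⟨s1, hs1, hs1γ⟩ := hγ1Γ
  obtain ⟨s2, hs2, hs2γ⟩ := hγ2Γ
  have hs1i : (s1 i : ℤ) = xa := by rw [← hγ1i]; exact congrFun hs1γ i
  have hs2i : (s2 i : ℤ) = za := by rw [← hγ2i]; exact congrFun hs2γ i
  have hsoff : ∀ j : Fin k, j ≠ i → s1 j = s2 j := by
    intro j hj
    apply Subtype.ext
    have h1 : (s1 j : ℤ) = γ1 j := congrFun hs1γ j
    have h2 : (s2 j : ℤ) = γ2 j := congrFun hs2γ j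
    have hy1j : γ1 j = y ⟨j, hj⟩ := congrFun hγ1y ⟨j, hj⟩
    have hy2j : γ2 j = y ⟨j, hj⟩ := congrFun hγ2y ⟨j, hj⟩
    rw [h1, h2, hy1j, hy2j]
  have hxine : s1 i ≠ s2 i := by
    intro h
    exact hne (by rw [← hs1i, ← hs2i, h])
  set lam : F := c s2 / c s1 with hlam
  set Nf : ∀ j : Fin k, Matrix {x : ℤ // x ∈ S j} {x : ℤ // x ∈ S j} F :=
    fun j => (1 : Matrix {x : ℤ // x ∈ S j} {x : ℤ // x ∈ S j} F) + Matrix.of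
      (fun a b : {x : ℤ // x ∈ S j} =>
        if j = i ∧ (a : ℤ) = za ∧ (b : ℤ) = xa then -lam else 0) with hNf
  have hNapp : ∀ (j : Fin k) (a b : {x : ℤ // x ∈ S j}), Nf j a b =
      (if a = b then (1 : F) else 0) +
        (if j = i ∧ (a : ℤ) = za ∧ (b : ℤ) = xa then -lam else 0) := by
    intro j a b
    simp only [hNf, Matrix.add_apply, Matrix.one_apply, Matrix.of_apply]
  have hNdiag : ∀ (j : Fin k) (a : {x : ℤ // x ∈ S j}), Nf j a a = 1 := by
    intro j a
    have h0 : ¬(j = i ∧ (a : ℤ) = za ∧ (a : ℤ) = xa) := by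
      rintro ⟨-, h1, h2⟩
      exact hne (h2.symm.trans h1)
    rw [hNapp, if_pos rfl, if_neg h0, add_zero]
  have hNoffd : ∀ (j : Fin k) (a b : {x : ℤ // x ∈ S j}), j ≠ i → a ≠ b → Nf j a b = 0 := by
    intro j a b hj hab
    have h0 : ¬(j = i ∧ (a : ℤ) = za ∧ (b : ℤ) = xa) := by
      rintro ⟨rfl, -⟩
      exact hj rfl
    rw [hNapp, if_neg hab, if_neg h0, add_zero]
  have hNoff : ∀ j, j ≠ i → Nf j = 1 := by
    intro j hj
    ext a b
    have h0 : ¬(j = i ∧ (a : ℤ) = za ∧ (b : ℤ) = xa) := by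
      rintro ⟨rfl, -⟩
      exact hj rfl
    rw [hNapp, Matrix.one_apply, if_neg h0, add_zero]
  have hunit : ∀ j, IsUnit (Nf j) := by
    intro j
    suffices hmul : Nf j * ((1 : Matrix {x : ℤ // x ∈ S j} {x : ℤ // x ∈ S j} F) + Matrix.of
        (fun a b : {x : ℤ // x ∈ S j} =>
          if j = i ∧ (a : ℤ) = za ∧ (b : ℤ) = xa then lam else 0)) = 1 by
      exact @isUnit_of_invertible _ _ _ (invertibleOfRightInverse _ _ hmul)
    set A := Matrix.of
      (fun a b : {x : ℤ // x ∈ S j} => if j = i ∧ (a : ℤ) = za ∧ (b : ℤ) = xa then -lam else 0)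
      with hA
    set B := Matrix.of
      (fun a b : {x : ℤ // x ∈ S j} => if j = i ∧ (a : ℤ) = za ∧ (b : ℤ) = xa then lam else 0)
      with hB
    have hAB : A * B = 0 := by
      ext a b
      rw [Matrix.mul_apply, Matrix.zero_apply]
      apply Finset.sum_eq_zero
      intro u _
      by_cases h2 : j = i ∧ (u : ℤ) = za ∧ (b : ℤ) = xa
      · have h1 : ¬(j = i ∧ (a : ℤ) = za ∧ (u : ℤ) = xa) := by
          rintro ⟨-, -, hu⟩
          exact hne (hu.symm.trans h2.2.1)
        rw [hA, Matrix.of_apply, if_neg h1, zero_mul]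
      · rw [hB, Matrix.of_apply, if_neg h2, mul_zero]
    have hABsum : A + B = 0 := by
      ext a b
      by_cases h : j = i ∧ (a : ℤ) = za ∧ (b : ℤ) = xa <;> simp [hA, hB, h]
    show (1 + A) * (1 + B) = 1
    rw [add_mul, one_mul, mul_add, mul_one, hAB, add_zero, add_assoc, add_comm B A, hABsum,
      add_zero]
  have hc'eq1 : ∀ s : (∀ j, {x : ℤ // x ∈ S j}), (s i : ℤ) ≠ za →
      (∑ t : ∀ j, {x : ℤ // x ∈ S j}, (∏ j, Nf j (s j) (t j)) * c t) = c s := by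
    intro s hs
    rw [Finset.sum_eq_single s]
    · rw [Finset.prod_congr rfl (fun j _ => hNdiag j (s j)), Finset.prod_const_one, one_mul]
    · intro t _ hts
      have hex : ∃ j, s j ≠ t j := by
        by_contra h
        push_neg at h
        exact hts (funext fun j => (h j).symm)
      obtain ⟨j, hj⟩ := hex
      have hzero : Nf j (s j) (t j) = 0 := by
        rw [hNapp, if_neg hj, if_neg, add_zero]
        rintro ⟨rfl, hsa, -⟩
        exact hs hsa
      rw [Finset.prod_eq_zero (Finset.mem_univ j) hzero, zero_mul]
    · intro h
      exact absurd (Finset.mem_univ s) h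
  have hc'eq2 : (∑ t : ∀ j, {x : ℤ // x ∈ S j}, (∏ j, Nf j (s2 j) (t j)) * c t) = 0 := by
    have hmain : (∑ t : ∀ j, {x : ℤ // x ∈ S j}, (∏ j, Nf j (s2 j) (t j)) * c t)
        = c s2 + (-lam) * c s1 := by
      rw [Finset.sum_eq_add_of_mem s2 s1 (Finset.mem_univ _) (Finset.mem_univ _)
        (fun h => hxine (congrFun h i).symm)]
      · congr 1
        · rw [Finset.prod_congr rfl (fun j _ => hNdiag j (s2 j)), Finset.prod_const_one, one_mul]
        · congr 1
          rw [Finset.prod_eq_single_of_mem i (Finset.mem_univ _)]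
          · rw [hNapp, if_neg (Ne.symm hxine), if_pos ⟨rfl, hs2i, hs1i⟩, zero_add]
          · intro j _ hj
            rw [← hsoff j hj]
            exact hNdiag j (s1 j)
      · intro t _ ht
        obtain ⟨ht2, ht1⟩ := ht
        by_cases hoff : ∀ j : Fin k, j ≠ i → t j = s2 j
        · have hti2 : t i ≠ s2 i := by
            intro h
            apply ht2
            funext j
            by_cases hj : j = i
            · subst hj; exact h
            · exact hoff j hj
          have hti1 : t i ≠ s1 i := by
            intro h
            apply ht1
            funext j
            by_cases hj : j = i
            · subst hj; exact h
            · exact (hoff j hj).trans (hsoff j hj).symm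
          have hzero : Nf i (s2 i) (t i) = 0 := by
            rw [hNapp, if_neg (fun h => hti2 h.symm), if_neg, add_zero]
            rintro ⟨-, -, hta⟩
            exact hti1 (Subtype.ext (hta.trans hs1i.symm))
          rw [Finset.prod_eq_zero (Finset.mem_univ i) hzero, zero_mul]
        · push_neg at hoff
          obtain ⟨j, hj, hjt⟩ := hoff
          have hzero : Nf j (s2 j) (t j) = 0 :=
            hNoffd j (s2 j) (t j) hj (fun h => hjt h.symm)
          rw [Finset.prod_eq_zero (Finset.mem_univ j) hzero, zero_mul]
    rw [hmain, hlam, neg_mul, div_mul_cancel₀ _ hs1, add_neg_cancel]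
  refine ⟨Nf, hunit, hNoff, ?_, ?_⟩
  · unfold sect1
    congr 1
    ext γ
    simp only [Finset.mem_filter]
    constructor
    · rintro ⟨hγ, hγi⟩
      refine ⟨?_, hγi⟩
      rw [mem_support_iff] at hγ ⊢
      obtain ⟨s, hsne, hsγ⟩ := hγ
      refine ⟨s, ?_, hsγ⟩
      have hsiv : (s i : ℤ) ≠ za := by
        rw [(congrFun hsγ i : (s i : ℤ) = γ i), hγi]; exact hne
      rwa [hc'eq1 s hsiv] at hsne
    · rintro ⟨hγ, hγi⟩
      refine ⟨?_, hγi⟩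
      rw [mem_support_iff] at hγ ⊢
      obtain ⟨s, hsne, hsγ⟩ := hγ
      refine ⟨s, ?_, hsγ⟩
      have hsiv : (s i : ℤ) ≠ za := by
        rw [(congrFun hsγ i : (s i : ℤ) = γ i), hγi]; exact hne
      rwa [hc'eq1 s hsiv]
  · intro hmem
    rw [sect1, Finset.mem_image] at hmem
    obtain ⟨γ, hγ, hγy⟩ := hmem
    rw [Finset.mem_filter] at hγ
    obtain ⟨hγΓ, hγi⟩ := hγ
    rw [mem_support_iff] at hγΓ
    obtain ⟨s, hsne, hsγ⟩ := hγΓ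
    have hss2 : s = s2 := by
      funext j
      apply Subtype.ext
      by_cases hj : j = i
      · subst hj
        rw [(congrFun hsγ j : (s j : ℤ) = γ j), hγi, ← hs2i]
      · rw [(congrFun hsγ j : (s j : ℤ) = γ j), (congrFun hγy ⟨j, hj⟩ : γ j = y ⟨j, hj⟩),
          ← (congrFun hγ2y ⟨j, hj⟩ : γ2 j = y ⟨j, hj⟩),
          ← (congrFun hs2γ j : (s2 j : ℤ) = γ2 j)]
    rw [hss2] at hsne
    exact hsne hc'eq2

end SlicePaper
end
end

section
/- Let ω = e^{2πi/3} ∈ ℂ, n ≥ 0 an integer, and A ⊆ {1,ω,ω²}^n trifferent. (1) For all x, y ∈ A with x ≠ y, f_{x,y}(x,y) = ∏_{i=1}^n (2x_i+y_i)(x_i+2y_i) ≠ 0. (2) For all x, y, z, t ∈ A with x ≠ y, z ≠ t and {x,y} ≠ {z,t} as unordered pairs, f_{x,y}(z,t) = 0. -/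
open scoped BigOperators
open Classical

noncomputable section

namespace SlicePaper

/-!
On the diagonal every factor is `(2a + b)(a + 2b)` with `‖a‖ = ‖b‖ = 1`, which cannot vanish
since `‖2a‖ = 2 ≠ 1 = ‖b‖`. Off the diagonal one of `z`, `t` lies outside `{x, y}`, say `z`;
trifference gives a coordinate where `x`, `y`, `z` are the three distinct cube roots of unity,
and these sum to `0`, killing the factor `x i + y i + z i`.
-/

theorem isPrimitiveRoot_w : IsPrimitiveRoot w 3 := by
  simpa [w] using Complex.isPrimitiveRoot_exp 3 (by norm_num)

theorem _root_.IsPrimitiveRoot.add_add_eq_zero_of_ne {K : Type*} [CommRing K] [IsDomain K]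
    {ζ : K} (hζ : IsPrimitiveRoot ζ 3) {a b c : K} (ha : a ∈ ({1, ζ, ζ ^ 2} : Set K))
    (hb : b ∈ ({1, ζ, ζ ^ 2} : Set K)) (hc : c ∈ ({1, ζ, ζ ^ 2} : Set K))
    (hab : a ≠ b) (hbc : b ≠ c) (hac : a ≠ c) : a + b + c = 0 := by
  have hsum : 1 + ζ + ζ ^ 2 = 0 := by
    simpa [Finset.sum_range_succ, add_assoc] using hζ.geom_sum_eq_zero (by norm_num)
  rcases ha with rfl | rfl | rfl <;> rcases hb with rfl | rfl | rfl <;>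
    rcases hc with rfl | rfl | rfl <;>
    first
      | exact absurd rfl hab
      | exact absurd rfl hbc
      | exact absurd rfl hac
      | linear_combination hsum

theorem norm_eq_one_of_mem_cube_roots {a : ℂ} (ha : a ∈ ({1, w, w ^ 2} : Set ℂ)) : ‖a‖ = 1 := by
  have hw := isPrimitiveRoot_w.pow_eq_one
  refine Complex.norm_eq_one_of_pow_eq_one (n := 3) ?_ (by norm_num)
  rcases ha with rfl | rfl | rfl
  · exact one_pow 3
  · exact hw
  · rw [← pow_mul, mul_comm, pow_mul, hw, one_pow]

theorem two_mul_add_ne_zero_of_norm_eq_one {a b : ℂ} (ha : ‖a‖ = 1) (hb : ‖b‖ = 1) :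
    2 * a + b ≠ 0 := by
  intro h
  have := congrArg (‖·‖) (eq_neg_of_add_eq_zero_left h)
  norm_num [ha, hb] at this

theorem f_self_eq_prod {n : ℕ} (x y : Fin n → ℂ) :
    f x y x y = ∏ i, (2 * x i + y i) * (x i + 2 * y i) :=
  Finset.prod_congr rfl fun i _ => by ring

theorem f_self_ne_zero {n : ℕ} {x y : Fin n → ℂ} (hx : ∀ i, ‖x i‖ = 1) (hy : ∀ i, ‖y i‖ = 1) :
    f x y x y ≠ 0 := by
  rw [f_self_eq_prod, Finset.prod_ne_zero_iff]
  intro i _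
  refine mul_ne_zero (two_mul_add_ne_zero_of_norm_eq_one (hx i) (hy i)) ?_
  rw [add_comm]
  exact two_mul_add_ne_zero_of_norm_eq_one (hy i) (hx i)

section Trifferent

variable {n : ℕ} {A : Finset (Fin n → ℂ)}

theorem exists_add_add_eq_zero_of_trifferent
    (hA : ∀ x ∈ A, ∀ i, x i ∈ ({1, w, w ^ 2} : Set ℂ)) (htrif : trifferent A)
    {x y z : Fin n → ℂ} (hx : x ∈ A) (hy : y ∈ A) (hz : z ∈ A) (hxy : x ≠ y) (hzx : z ≠ x)
    (hzy : z ≠ y) : ∃ i, x i + y i + z i = 0 := by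
  obtain ⟨i, h1, h2, h3⟩ := htrif x hx y hy z hz hxy (Ne.symm hzy) (Ne.symm hzx)
  exact ⟨i, isPrimitiveRoot_w.add_add_eq_zero_of_ne (hA x hx i) (hA y hy i) (hA z hz i) h1 h2 h3⟩

theorem f_eq_zero_of_left_ne (hA : ∀ x ∈ A, ∀ i, x i ∈ ({1, w, w ^ 2} : Set ℂ))
    (htrif : trifferent A) {x y z : Fin n → ℂ} (t : Fin n → ℂ) (hx : x ∈ A) (hy : y ∈ A)
    (hz : z ∈ A) (hxy : x ≠ y) (hzx : z ≠ x) (hzy : z ≠ y) : f x y z t = 0 := by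
  obtain ⟨i, hi⟩ := exists_add_add_eq_zero_of_trifferent hA htrif hx hy hz hxy hzx hzy
  exact Finset.prod_eq_zero (Finset.mem_univ i) (by rw [hi, zero_mul])

theorem f_eq_zero_of_right_ne (hA : ∀ x ∈ A, ∀ i, x i ∈ ({1, w, w ^ 2} : Set ℂ))
    (htrif : trifferent A) {x y t : Fin n → ℂ} (z : Fin n → ℂ) (hx : x ∈ A) (hy : y ∈ A)
    (ht : t ∈ A) (hxy : x ≠ y) (htx : t ≠ x) (hty : t ≠ y) : f x y z t = 0 := by
  obtain ⟨i, hi⟩ := exists_add_add_eq_zero_of_trifferent hA htrif hx hy ht hxy htx hty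
  exact Finset.prod_eq_zero (Finset.mem_univ i) (by rw [hi, mul_zero])

end Trifferent

/-- values of `f_{x,y}` on pairs from a trifferent set. -/
theorem stmt16 {n : ℕ} (A : Finset (Fin n → ℂ))
    (hA : ∀ x ∈ A, ∀ i, x i ∈ ({1, w, w ^ 2} : Set ℂ))
    (htrif : trifferent A) :
    (∀ x ∈ A, ∀ y ∈ A, x ≠ y →
      f x y x y = ∏ i, (2 * x i + y i) * (x i + 2 * y i) ∧ f x y x y ≠ 0) ∧
    (∀ x ∈ A, ∀ y ∈ A, ∀ z ∈ A, ∀ t ∈ A, x ≠ y → z ≠ t →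
      ¬((x = z ∧ y = t) ∨ (x = t ∧ y = z)) → f x y z t = 0) := by
  refine ⟨fun x hx y hy _ => ⟨f_self_eq_prod x y, ?_⟩, ?_⟩
  · exact f_self_ne_zero (fun i => norm_eq_one_of_mem_cube_roots (hA x hx i))
      (fun i => norm_eq_one_of_mem_cube_roots (hA y hy i))
  intro x hx y hy z hz t ht hxy hzt hne
  by_cases hz' : z ≠ x ∧ z ≠ y
  · exact f_eq_zero_of_left_ne hA htrif t hx hy hz hxy hz'.1 hz'.2
  by_cases ht' : t ≠ x ∧ t ≠ y
  · exact f_eq_zero_of_right_ne hA htrif z hx hy ht hxy ht'.1 ht'.2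
  -- `z, t ∈ {x, y}` and `z ≠ t` force `{z, t} = {x, y}`.
  exfalso
  rw [not_and_or, not_ne_iff, not_ne_iff] at hz' ht'
  rcases hz' with rfl | rfl <;> rcases ht' with rfl | rfl <;> tauto

end SlicePaper
end
end

section
/- Let n ≥ 0 be an integer. For every x, y ∈ ℂ^n, the function f_{x,y} : ℂ^n × ℂ^n → ℂ lies in the ℂ-linear span of the functions g_{α,β}(z,t) := ∏_{i=1}^n (z_i+t_i)^{α_i}·(z_i·t_i)^{β_i}, where α, β ∈ {0,1}^n range over pairs with α_i + β_i ≤ 1 for every i; there are exactly 3^n such functions g_{α,β}, so the span of all functions f_{x,y} has dimension at most 3^n. -/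
open scoped BigOperators
open Classical

noncomputable section

namespace SlicePaper

section Aux

variable {n : ℕ}

/-- coefficient functions for the expansion -/
private def Acoef (h : Fin n → Fin 3) : Fin n → ℕ := fun i => if h i = 1 then 1 else 0
private def Bcoef (h : Fin n → Fin 3) : Fin n → ℕ := fun i => if h i = 2 then 1 else 0

private lemma per_factor (a z t : ℂ) (j : Fin 3) :
    (if j = 0 then a ^ 2 else if j = 1 then a * (z + t) else z * t)
      = (if j = 0 then a ^ 2 else if j = 1 then a else 1) *
        ((z + t) ^ (if j = 1 then (1 : ℕ) else 0) * (z * t) ^ (if j = 2 then (1 : ℕ) else 0)) := by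
  fin_cases j <;> simp [Fin.ext_iff]

private lemma key_mem (x y : Fin n → ℂ) :
    (fun q : (Fin n → ℂ) × (Fin n → ℂ) => f x y q.1 q.2) ∈
      Submodule.span ℂ
        {h : (Fin n → ℂ) × (Fin n → ℂ) → ℂ |
          ∃ α β : Fin n → ℕ, (∀ i, α i + β i ≤ 1) ∧ h = g α β} := by
  have expand : (fun q : (Fin n → ℂ) × (Fin n → ℂ) => f x y q.1 q.2)
      = ∑ h : Fin n → Fin 3,
          (∏ i, (if h i = 0 then (x i + y i) ^ 2 else if h i = 1 then x i + y i else 1)) •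
            g (Acoef h) (Bcoef h) := by
    funext q
    simp only [Finset.sum_apply, Pi.smul_apply, smul_eq_mul]
    unfold f
    have step1 : ∀ i : Fin n, (x i + y i + q.1 i) * (x i + y i + q.2 i)
        = ∑ j : Fin 3, (if j = 0 then (x i + y i) ^ 2
            else if j = 1 then (x i + y i) * (q.1 i + q.2 i) else q.1 i * q.2 i) := by
      intro i
      rw [Fin.sum_univ_three]
      simp [Fin.ext_iff]
      ring
    calc (∏ i, (x i + y i + q.1 i) * (x i + y i + q.2 i))
        = ∏ i, ∑ j : Fin 3, (if j = 0 then (x i + y i) ^ 2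
            else if j = 1 then (x i + y i) * (q.1 i + q.2 i) else q.1 i * q.2 i) :=
          Finset.prod_congr rfl (fun i _ => step1 i)
      _ = ∑ h ∈ Fintype.piFinset (fun _ : Fin n => (Finset.univ : Finset (Fin 3))),
            ∏ i, (if h i = 0 then (x i + y i) ^ 2
              else if h i = 1 then (x i + y i) * (q.1 i + q.2 i) else q.1 i * q.2 i) :=
          Finset.prod_univ_sum _ _
      _ = ∑ h : Fin n → Fin 3,
            (∏ i, (if h i = 0 then (x i + y i) ^ 2 else if h i = 1 then x i + y i else 1)) *
              g (Acoef h) (Bcoef h) q := by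
          rw [Fintype.piFinset_univ]
          refine Finset.sum_congr rfl (fun h _ => ?_)
          rw [show g (Acoef h) (Bcoef h) q
              = ∏ i, ((q.1 i + q.2 i) ^ (if h i = 1 then (1 : ℕ) else 0) *
                  (q.1 i * q.2 i) ^ (if h i = 2 then (1 : ℕ) else 0)) from rfl,
            ← Finset.prod_mul_distrib]
          exact Finset.prod_congr rfl (fun i _ => per_factor (x i + y i) (q.1 i) (q.2 i) (h i))
  rw [expand]
  refine Submodule.sum_mem _ (fun h _ => Submodule.smul_mem _ _ (Submodule.subset_span ?_))
  refine ⟨Acoef h, Bcoef h, fun i => ?_, rfl⟩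
  simp only [Acoef, Bcoef]
  split_ifs <;> simp_all

private def pairEquiv (n : ℕ) :
    {p : (Fin n → Fin 2) × (Fin n → Fin 2) // ∀ i, (p.1 i : ℕ) + (p.2 i : ℕ) ≤ 1} ≃
      (Fin n → {q : Fin 2 × Fin 2 // (q.1 : ℕ) + (q.2 : ℕ) ≤ 1}) where
  toFun p i := ⟨(p.1.1 i, p.1.2 i), p.2 i⟩
  invFun f := ⟨(fun i => (f i).1.1, fun i => (f i).1.2), fun i => (f i).2⟩
  left_inv _ := rfl
  right_inv _ := rfl

end Aux

set_option maxHeartbeats 1000000 in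
/-- each `f_{x,y}` lies in the span of the `3^n` monomial functions
`g_{α,β}`, so the span of all the `f_{x,y}` has dimension at most `3^n`. -/
theorem stmt18 {n : ℕ} :
    (∀ x y : Fin n → ℂ,
      (fun q : (Fin n → ℂ) × (Fin n → ℂ) => f x y q.1 q.2) ∈
        Submodule.span ℂ
          {h : (Fin n → ℂ) × (Fin n → ℂ) → ℂ |
            ∃ α β : Fin n → ℕ, (∀ i, α i + β i ≤ 1) ∧ h = g α β}) ∧
    ((Finset.univ.filter (fun p : (Fin n → Fin 2) × (Fin n → Fin 2) =>
        ∀ i, (p.1 i : ℕ) + (p.2 i : ℕ) ≤ 1)).card = 3 ^ n) ∧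
    Module.finrank ℂ (Submodule.span ℂ
      (Set.range (fun xy : (Fin n → ℂ) × (Fin n → ℂ) =>
        fun q : (Fin n → ℂ) × (Fin n → ℂ) => f xy.1 xy.2 q.1 q.2))) ≤ 3 ^ n := by
  have part1 : ∀ x y : Fin n → ℂ,
      (fun q : (Fin n → ℂ) × (Fin n → ℂ) => f x y q.1 q.2) ∈
        Submodule.span ℂ
          {h : (Fin n → ℂ) × (Fin n → ℂ) → ℂ |
            ∃ α β : Fin n → ℕ, (∀ i, α i + β i ≤ 1) ∧ h = g α β} := fun x y => key_mem x y
  have part2 : (Finset.univ.filter (fun p : (Fin n → Fin 2) × (Fin n → Fin 2) =>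
      ∀ i, (p.1 i : ℕ) + (p.2 i : ℕ) ≤ 1)).card = 3 ^ n := by
    have h3 : Fintype.card {q : Fin 2 × Fin 2 // (q.1 : ℕ) + (q.2 : ℕ) ≤ 1} = 3 := by decide
    rw [← Fintype.card_subtype, Fintype.card_congr (pairEquiv n), Fintype.card_fun, h3, Fintype.card_fin]
  refine ⟨part1, part2, ?_⟩
  set T : Finset (((Fin n → ℂ) × (Fin n → ℂ)) → ℂ) :=
    (Finset.univ.filter (fun p : (Fin n → Fin 2) × (Fin n → Fin 2) =>
      ∀ i, (p.1 i : ℕ) + (p.2 i : ℕ) ≤ 1)).image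
      (fun p => g (fun i => (p.1 i : ℕ)) (fun i => (p.2 i : ℕ))) with hT
  have hGT : {h : (Fin n → ℂ) × (Fin n → ℂ) → ℂ |
      ∃ α β : Fin n → ℕ, (∀ i, α i + β i ≤ 1) ∧ h = g α β} ⊆ (T : Set _) := by
    rintro h ⟨α, β, hab, rfl⟩
    refine Finset.mem_coe.2 (Finset.mem_image.2
      ⟨(fun i => (⟨α i, by have := hab i; omega⟩ : Fin 2),
        fun i => (⟨β i, by have := hab i; omega⟩ : Fin 2)), ?_, rfl⟩)
    simp only [Finset.mem_filter, Finset.mem_univ, true_and]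
    exact fun i => hab i
  have hle : Submodule.span ℂ
      (Set.range (fun xy : (Fin n → ℂ) × (Fin n → ℂ) =>
        fun q : (Fin n → ℂ) × (Fin n → ℂ) => f xy.1 xy.2 q.1 q.2)) ≤
      Submodule.span ℂ (T : Set _) := by
    rw [Submodule.span_le]
    rintro _ ⟨xy, rfl⟩
    exact Submodule.span_mono hGT (part1 xy.1 xy.2)
  have h1 : Module.finrank ℂ (Submodule.span ℂ (T : Set (((Fin n → ℂ) × (Fin n → ℂ)) → ℂ))) ≤ T.card :=
    finrank_span_finset_le_card (R := ℂ) T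
  have h2 := Submodule.finrank_mono (R := ℂ) hle
  exact le_trans h2 (le_trans h1 (by rw [← part2]; exact Finset.card_image_le))

end SlicePaper
end
end

section
/- Let n ≥ 0 be an integer and let A ⊆ 𝔽_3^n be trifferent. Then 2^n · |A| ≤ 2 · 3^n, i.e., |A| ≤ 2·(3/2)^n. -/
open scoped BigOperators
open Classical

noncomputable section

namespace SlicePaper

lemma zmod3_aux : ∀ (a x y z : ZMod 3), x ≠ a → y ≠ a → z ≠ a →
    ¬(x ≠ y ∧ y ≠ z ∧ x ≠ z) := by decide

lemma trif_key : ∀ (n : ℕ) (A : Finset (Fin n → ZMod 3)), trifferent A →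
    2 ^ n * A.card ≤ 2 * 3 ^ n := by
  intro n
  induction n with
  | zero =>
    intro A _
    have h1 : A.card ≤ 1 := by
      have := Finset.card_le_univ A
      simpa using this
    simpa using h1.trans (by norm_num)
  | succ n ih =>
    intro A hA
    obtain ⟨a, ha⟩ : ∃ a : ZMod 3, 3 * (A.filter (fun x => x 0 = a)).card ≤ A.card := by
      by_contra h
      push_neg at h
      have hsum : A.card = ∑ b : ZMod 3, (A.filter (fun x => x 0 = b)).card :=
        Finset.card_eq_sum_card_fiberwise (fun x _ => Finset.mem_univ (x 0))
      have hlt : ∑ b : ZMod 3, A.card < ∑ b : ZMod 3, 3 * (A.filter (fun x => x 0 = b)).card :=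
        Finset.sum_lt_sum_of_nonempty (by simp) (fun b _ => h b)
      have heq : 3 * A.card = ∑ b : ZMod 3, 3 * (A.filter (fun x => x 0 = b)).card := by
        rw [← Finset.mul_sum, ← hsum]
      have hconst : ∑ _b : ZMod 3, A.card = 3 * A.card := by
        simp [Finset.sum_const, Finset.card_univ, mul_comm]
      rw [hconst, ← heq] at hlt
      exact lt_irrefl _ hlt
    obtain ⟨A', hA'def⟩ : ∃ A', A' = A.filter (fun x => ¬ x 0 = a) := ⟨_, rfl⟩
    have hsplit : (A.filter (fun x => x 0 = a)).card + A'.card = A.card := by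
      rw [hA'def]; exact Finset.card_filter_add_card_filter_not _
    have hmem' : ∀ x, x ∈ A' ↔ x ∈ A ∧ ¬ x 0 = a := by
      intro x; rw [hA'def]; exact Finset.mem_filter
    have hmemA' : ∀ x ∈ A', x ∈ A ∧ x 0 ≠ a := fun x hx => (hmem' x).mp hx
    by_cases hcol : ∃ x ∈ A', ∃ y ∈ A', x ≠ y ∧ ∀ j : Fin n, x j.succ = y j.succ
    · -- collision: A' has at most 2 elements
      obtain ⟨x, hx, y, hy, hxy, hproj⟩ := hcol
      have hsub : A' ⊆ {x, y} := by
        intro z hz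
        by_contra hzm
        simp only [Finset.mem_insert, Finset.mem_singleton, not_or] at hzm
        obtain ⟨hzx, hzy⟩ := hzm
        obtain ⟨i, h1, h2, h3⟩ := hA x (hmemA' x hx).1 y (hmemA' y hy).1 z (hmemA' z hz).1
          hxy (fun h => hzy h.symm) (fun h => hzx h.symm)
        rcases Fin.eq_zero_or_eq_succ i with rfl | ⟨j, rfl⟩
        · exact zmod3_aux a (x 0) (y 0) (z 0) (hmemA' x hx).2 (hmemA' y hy).2
            (hmemA' z hz).2 ⟨h1, h2, h3⟩
        · exact h1 (hproj j)
      have hA'2 : A'.card ≤ 2 := by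
        calc A'.card ≤ ({x, y} : Finset _).card := Finset.card_le_card hsub
          _ ≤ ({y} : Finset _).card + 1 := Finset.card_insert_le _ _
          _ = 2 := by simp
      have hcard3 : A.card ≤ 3 := by
        generalize (A.filter (fun x => x 0 = a)).card = c at ha hsplit
        omega
      have hp : 2 ^ n ≤ 3 ^ n := Nat.pow_le_pow_left (by norm_num) n
      calc 2 ^ (n + 1) * A.card ≤ 2 ^ (n + 1) * 3 := Nat.mul_le_mul_left _ hcard3
        _ = 3 * 2 * 2 ^ n := by ring
        _ ≤ 3 * 2 * 3 ^ n := Nat.mul_le_mul_left _ hp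
        _ = 2 * 3 ^ (n + 1) := by ring
    · -- no collision: projection is injective
      push_neg at hcol
      set π : (Fin (n + 1) → ZMod 3) → (Fin n → ZMod 3) := fun x j => x j.succ with hπ
      have hinj : Set.InjOn π A' := by
        intro x hx y hy h
        by_contra hxy
        obtain ⟨j, hj⟩ := hcol x (Finset.mem_coe.mp hx) y (Finset.mem_coe.mp hy) hxy
        exact hj (congrFun h j)
      set B := A'.image π with hB
      have hBcard : B.card = A'.card := Finset.card_image_of_injOn hinj
      have hBt : trifferent B := by
        intro u hu v hv w hw huv hvw huw
        obtain ⟨x, hx, rfl⟩ := Finset.mem_image.mp hu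
        obtain ⟨y, hy, rfl⟩ := Finset.mem_image.mp hv
        obtain ⟨z, hz, rfl⟩ := Finset.mem_image.mp hw
        have hxy : x ≠ y := fun h => huv (by rw [h])
        have hyz : y ≠ z := fun h => hvw (by rw [h])
        have hxz : x ≠ z := fun h => huw (by rw [h])
        obtain ⟨i, h1, h2, h3⟩ := hA x (hmemA' x hx).1 y (hmemA' y hy).1 z (hmemA' z hz).1
          hxy hyz hxz
        rcases Fin.eq_zero_or_eq_succ i with rfl | ⟨j, rfl⟩
        · exact absurd ⟨h1, h2, h3⟩ (zmod3_aux a (x 0) (y 0) (z 0) (hmemA' x hx).2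
            (hmemA' y hy).2 (hmemA' z hz).2)
        · exact ⟨j, h1, h2, h3⟩
      have hih := ih B hBt
      rw [hBcard] at hih
      have h2A : 2 * A.card ≤ 3 * A'.card := by
        generalize (A.filter (fun x => x 0 = a)).card = c at ha hsplit
        omega
      calc 2 ^ (n + 1) * A.card = 2 ^ n * (2 * A.card) := by ring
        _ ≤ 2 ^ n * (3 * A'.card) := Nat.mul_le_mul_left _ h2A
        _ = 3 * (2 ^ n * A'.card) := by ring
        _ ≤ 3 * (2 * 3 ^ n) := Nat.mul_le_mul_left _ hih
        _ = 2 * 3 ^ (n + 1) := by ring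

/-- a trifferent subset of `𝔽₃^n` satisfies `|A| ≤ 2·(3/2)^n`. -/
theorem stmt19 {n : ℕ} (A : Finset (Fin n → ZMod 3)) (htrif : trifferent A) :
    2 ^ n * A.card ≤ 2 * 3 ^ n :=
  trif_key n A htrif

end SlicePaper
end
end
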